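/- arXiv:1503.07352 — 5 statements merged into one kernel-verified Lean document; each statement's English description precedes it below -/
import Mathlib

section
/- Let a ∈ S_n and let σ ∈ G_f commute with a. If σ(i₀) = a^d(i₀) for some d > 0 and σ(i₀) ≠ i₀, then letting m be the order of i₀ under a (the least c > 0 with a^c(i₀) = i₀) and d₀ = gcd(m, d), we have d₀ < m and f(a^{d₀ h + j}(i₀)) = f(a^j(i₀)) for all nonnegative integers h, j. -/
/-- Lemma 4.2: if `σ ∈ G_f` commutes with `a`, `σ i₀ = a^d i₀` for some `d > 0`
and `σ i₀ ≠ i₀`, then with `m` the minimal period of `i₀` under `a` and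
`d₀ = gcd m d`, we have `d₀ < m` and `f (a^{d₀ h + j} i₀) = f (a^j i₀)` for all
`h, j ≥ 0`. -/
theorem stmt3 (n : ℕ) (X : Type*) (f : Fin n → X) (a σ : Equiv.Perm (Fin n))
    (hσf : ∀ i, f (σ i) = f i) (hcomm : σ * a = a * σ)
    (i₀ : Fin n) (d : ℕ) (hd : 0 < d) (hσi : σ i₀ = (a ^ d) i₀) (hne : σ i₀ ≠ i₀) :
    Nat.gcd (Function.minimalPeriod (⇑a) i₀) d < Function.minimalPeriod (⇑a) i₀ ∧
    ∀ h j : ℕ,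
      f ((a ^ (Nat.gcd (Function.minimalPeriod (⇑a) i₀) d * h + j)) i₀) =
        f ((a ^ j) i₀) := by
  set m := Function.minimalPeriod (⇑a) i₀ with hm
  set d₀ := Nat.gcd m d with hd₀
  -- m is positive
  have hper : i₀ ∈ Function.periodicPts (⇑a) := by
    refine ⟨orderOf a, orderOf_pos a, ?_⟩
    show (⇑a)^[orderOf a] i₀ = i₀
    rw [← Equiv.Perm.coe_pow, pow_orderOf_eq_one]
    rfl
  have hmpos : 0 < m := Function.minimalPeriod_pos_of_mem_periodicPts hper
  -- a^m i₀ = i₀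
  have ham : (a ^ m) i₀ = i₀ := by
    have h := Function.iterate_minimalPeriod (f := ⇑a) (x := i₀)
    rwa [← Equiv.Perm.coe_pow] at h
  have hamk : ∀ j k : ℕ, (a ^ (j + k * m)) i₀ = (a ^ j) i₀ := by
    intro j k
    induction k with
    | zero => simp
    | succ k ih =>
      have e : j + (k + 1) * m = (j + k * m) + m := by ring
      rw [e, pow_add, Equiv.Perm.mul_apply, ham, ih]
  -- commuting consequence
  have hcomm' : ∀ j : ℕ, σ * a ^ j = a ^ j * σ := fun j =>
    ((Commute.symm hcomm).pow_left j).symm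
  have hstep : ∀ j : ℕ, f ((a ^ (j + d)) i₀) = f ((a ^ j) i₀) := by
    intro j
    have h1 : (a ^ (j + d)) i₀ = (a ^ j) ((a ^ d) i₀) := by
      rw [pow_add, Equiv.Perm.mul_apply]
    have h2 : (a ^ j) ((a ^ d) i₀) = σ ((a ^ j) i₀) := by
      rw [← hσi]
      have := congrArg (fun p => p i₀) (hcomm' j)
      simpa using this.symm
    rw [h1, h2, hσf]
  have hstepk : ∀ k j : ℕ, f ((a ^ (j + k * d)) i₀) = f ((a ^ j) i₀) := by
    intro k
    induction k with
    | zero => simp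
    | succ k ih =>
      intro j
      have : j + (k + 1) * d = (j + d) + k * d := by ring
      rw [this, ih (j + d), hstep]
  -- d₀ < m
  have hdlt : d₀ < m := by
    rcases lt_or_eq_of_le (Nat.le_of_dvd hmpos (Nat.gcd_dvd_left m d)) with h | h
    · exact h
    · exfalso
      have hmd : m ∣ d := h ▸ Nat.gcd_dvd_right m d
      obtain ⟨t, rfl⟩ := hmd
      apply hne
      rw [hσi, mul_comm]
      simpa using hamk 0 t
  refine ⟨hdlt, ?_⟩
  -- Bezout: find x y : ℕ with d₀ + x * m = y * d
  obtain ⟨x, y, hxy⟩ : ∃ x y : ℕ, d₀ + x * m = y * d := by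
    have hb : (d₀ : ℤ) = m * Nat.gcdA m d + d * Nat.gcdB m d := Nat.gcd_eq_gcd_ab m d
    set A : ℤ := Nat.gcdA m d with hA
    set b : ℤ := Nat.gcdB m d with hbdef
    set k : ℤ := b.natAbs + 1 with hk
    set y : ℤ := b + m * k with hy
    set x : ℤ := -A + d * k with hx
    have habs : -(b.natAbs : ℤ) ≤ b ∧ (b : ℤ) ≤ b.natAbs := by omega
    have hm1 : (1 : ℤ) ≤ m := by exact_mod_cast hmpos
    have hd1 : (1 : ℤ) ≤ d := by exact_mod_cast hd
    have hyge : (m : ℤ) ≤ y := by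
      have h1 : (m : ℤ) * k = m * b.natAbs + m := by rw [hk]; ring
      have h2 : (b.natAbs : ℤ) ≤ m * b.natAbs := by
        nlinarith [habs.2, (by positivity : (0:ℤ) ≤ (b.natAbs : ℤ))]
      have := habs.1
      rw [hy]; omega
    have hyeq : (d : ℤ) * y - d₀ = m * x := by
      rw [hy, hx]
      linear_combination -hb
    have hdle : (d₀ : ℤ) ≤ d * y := by
      have h1 : (d₀ : ℤ) ≤ m := by exact_mod_cast hdlt.le
      have h2 : (y : ℤ) ≤ d * y := by nlinarith
      omega
    have hx0 : 0 ≤ x := by nlinarith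
    have hy0 : 0 ≤ y := by omega
    refine ⟨x.toNat, y.toNat, ?_⟩
    zify [hx0, hy0]
    rw [Int.toNat_of_nonneg hx0, Int.toNat_of_nonneg hy0]
    linarith [hyeq]
  intro h j
  have e1 : f ((a ^ (d₀ * h + j)) i₀) = f ((a ^ (d₀ * h + j + (x * h) * m)) i₀) := by
    rw [hamk]
  have e2 : d₀ * h + j + (x * h) * m = j + (y * h) * d := by
    have h2 : (d₀ + x * m) * h = (y * d) * h := by rw [hxy]
    ring_nf at h2 ⊢
    linarith
  rw [e1, e2, hstepk]
end

section
/- Let a ∈ S_n, σ ∈ G_f a centralizer element of a with σ(i₀) ≠ i₀, and suppose σ(i₀) ≠ a^d(i₀) for every d > 0. Then i₀ and σ(i₀) lie in distinct cycles of a of the same length, and f(a^k(i₀)) = f(a^k(σ(i₀))) for every k ≥ 0. -/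
/-- Lemma 4.3: if `σ ∈ G_f` commutes with `a`, `σ i₀ ≠ i₀` and `σ i₀ ≠ a^d i₀`
for every `d > 0`, then `i₀` and `σ i₀` lie in disjoint cycles of `a` of the
same length, and `f (a^k i₀) = f (a^k (σ i₀))` for every `k ≥ 0`. -/
theorem stmt4 (n : ℕ) (X : Type*) (f : Fin n → X) (a σ : Equiv.Perm (Fin n))
    (hσf : ∀ i, f (σ i) = f i) (hcomm : σ * a = a * σ)
    (i₀ : Fin n) (hne : σ i₀ ≠ i₀) (hnd : ∀ d : ℕ, 0 < d → σ i₀ ≠ (a ^ d) i₀) :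
    (∀ k l : ℕ, (a ^ k) i₀ ≠ (a ^ l) (σ i₀)) ∧
    Function.minimalPeriod (⇑a) i₀ = Function.minimalPeriod (⇑a) (σ i₀) ∧
    ∀ k : ℕ, f ((a ^ k) i₀) = f ((a ^ k) (σ i₀)) := by
  have hC : Commute σ a := hcomm
  have hc : ∀ (k : ℕ) (x : Fin n), (a ^ k) (σ x) = σ ((a ^ k) x) := by
    intro k x
    have h : a ^ k * σ = σ * a ^ k := ((hC.symm).pow_left k)
    calc (a ^ k) (σ x) = (a ^ k * σ) x := rfl
      _ = (σ * a ^ k) x := by rw [h]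
      _ = σ ((a ^ k) x) := rfl
  set T := orderOf a with hT
  have hTpos : 0 < T := orderOf_pos a
  have haT : ∀ x : Fin n, (a ^ T) x = x := by
    intro x; rw [pow_orderOf_eq_one a]; rfl
  refine ⟨?_, ?_, ?_⟩
  · intro k l h
    rw [hc] at h
    have h2 : (a ^ ((T - 1) * l)) ((a ^ k) i₀) = (a ^ ((T - 1) * l)) (σ ((a ^ l) i₀)) := by
      rw [h]
    rw [hc] at h2
    simp only [← Equiv.Perm.mul_apply, ← pow_add] at h2
    have hTl : (T - 1) * l + l = T * l := by
      have h1 : T - 1 + 1 = T := Nat.succ_pred_eq_of_pos hTpos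
      calc (T - 1) * l + l = (T - 1 + 1) * l := by ring
        _ = T * l := by rw [h1]
    rw [hTl, pow_mul, pow_orderOf_eq_one, one_pow] at h2
    rw [mul_one] at h2
    rcases Nat.eq_zero_or_pos ((T - 1) * l + k) with h0 | hpos
    · rw [h0, pow_zero] at h2
      exact hne h2.symm
    · exact hnd _ hpos h2.symm
  · have key : ∀ k : ℕ, Function.IsPeriodicPt (⇑a) k (σ i₀) ↔
        Function.IsPeriodicPt (⇑a) k i₀ := by
      intro k
      unfold Function.IsPeriodicPt Function.IsFixedPt
      rw [Equiv.Perm.iterate_eq_pow, hc]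
      exact σ.apply_eq_iff_eq
    have h1 : i₀ ∈ Function.periodicPts (⇑a) :=
      ⟨T, hTpos, by rw [Function.IsPeriodicPt, Equiv.Perm.iterate_eq_pow]; exact haT i₀⟩
    have h2 : σ i₀ ∈ Function.periodicPts (⇑a) :=
      ⟨T, hTpos, by rw [Function.IsPeriodicPt, Equiv.Perm.iterate_eq_pow]; exact haT (σ i₀)⟩
    apply le_antisymm
    · exact Function.IsPeriodicPt.minimalPeriod_le
        (Function.minimalPeriod_pos_of_mem_periodicPts h2)
        ((key _).mp (Function.isPeriodicPt_minimalPeriod _ _))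
    · exact Function.IsPeriodicPt.minimalPeriod_le
        (Function.minimalPeriod_pos_of_mem_periodicPts h1)
        ((key _).mpr (Function.isPeriodicPt_minimalPeriod _ _))
  · intro k
    rw [hc, hσf]
end

section
/- Suppose a permutation a ∈ S_n has a cycle of the form (i₀ ⋯ i_{d-1} i_d ⋯ i_{kd-1}) with d ≥ 1, k > 1, and f(i_{cd+t}) = f(i_t) for all 0 ≤ t ≤ d-1 and 0 ≤ c ≤ k-1. Then a is not f-simple, i.e., there exists σ ∈ G_f with σ ≠ id and σa = aσ. -/
/-- Lemma 4.4 (i): if `a` has a cycle `(i₀ ⋯ i_{kd-1})` (so the minimal period of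
`i₀` under `a` is `k*d`) with `d ≥ 1`, `k > 1` and `f (i_{cd+t}) = f (i_t)` for
all `0 ≤ t < d`, `0 ≤ c < k`, then `a` is not `f`-simple. -/
theorem stmt5 (n : ℕ) (X : Type*) (f : Fin n → X) (a : Equiv.Perm (Fin n))
    (i₀ : Fin n) (d k : ℕ) (hd : 1 ≤ d) (hk : 1 < k)
    (hper : Function.minimalPeriod (⇑a) i₀ = k * d)
    (hf : ∀ t < d, ∀ c < k, f ((a ^ (c * d + t)) i₀) = f ((a ^ t) i₀)) :
    ∃ σ : Equiv.Perm (Fin n), σ ≠ 1 ∧ (∀ i, f (σ i) = f i) ∧ σ * a = a * σ := by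
  classical
  set N := k * d with hN
  have hdpos : 0 < d := hd
  have hdN : d ≤ N := Nat.le_mul_of_pos_left d (Nat.lt_of_lt_of_le Nat.zero_lt_one hk.le)
  have hNpos : 0 < N := Nat.mul_pos (Nat.lt_of_lt_of_le Nat.zero_lt_one hk.le) hd
  -- the function g j = f (a^j i₀)
  set g : ℕ → X := fun j => f ((a ^ j) i₀) with hg
  have hpow_iter : ∀ (j : ℕ), (a ^ j) i₀ = (⇑a)^[j] i₀ := by
    intro j; rw [Equiv.Perm.iterate_eq_pow]
  have hperiod : ∀ j : ℕ, (a ^ (j % N)) i₀ = (a ^ j) i₀ := by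
    intro j
    rw [hpow_iter, hpow_iter, ← hper, Function.iterate_mod_minimalPeriod_eq]
  have gmod : ∀ j : ℕ, g (j % N) = g j := fun j => congrArg f (hperiod j)
  have gstep : ∀ j : ℕ, g (j + d) = g j := by
    intro j
    have h1 : g j = g (j % N) := (gmod j).symm
    have h2 : g (j + d) = g (j % N + d) := by
      rw [← gmod (j + d), ← gmod (j % N + d), Nat.add_mod j d,
        Nat.add_mod (j % N) d, Nat.mod_mod_of_dvd j (dvd_refl N)]
    rw [h1, h2]
    set j' := j % N with hj'
    have hj'N : j' < N := Nat.mod_lt _ hNpos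
    set t := j' % d with ht
    set c := j' / d with hc
    have htd : t < d := Nat.mod_lt _ hdpos
    have hck : c < k := by
      rw [hc, Nat.div_lt_iff_lt_mul hdpos]; exact hj'N
    have hsplit : j' = c * d + t := by
      rw [hc, ht, Nat.mul_comm, Nat.div_add_mod]
    have e1 : g j' = g t := by rw [hsplit]; exact hf t htd c hck
    have e2 : g (j' + d) = g t := by
      have : j' + d = (c + 1) * d + t := by rw [hsplit]; ring
      rw [this]
      rcases Nat.lt_or_ge (c + 1) k with h' | h'
      · exact hf t htd (c + 1) h'
      · have hck1 : c + 1 = k := Nat.le_antisymm hck h'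
        have : (c + 1) * d + t = N + t := by rw [hN, ← hck1]
        rw [this, ← gmod (N + t), Nat.add_mod_left, Nat.mod_eq_of_lt (lt_of_lt_of_le htd hdN)]
    rw [e1, e2]
  -- σ := (a.cycleOf i₀) ^ d
  set c := a.cycleOf i₀ with hcdef
  have hcomm : Commute c a := by
    apply Equiv.ext
    intro j
    simp only [Equiv.Perm.mul_apply, hcdef]
    by_cases h : a.SameCycle i₀ j
    · simp [Equiv.Perm.cycleOf_apply, h, h.apply_right]
    · rw [Equiv.Perm.cycleOf_apply_of_not_sameCycle h,
        Equiv.Perm.cycleOf_apply_of_not_sameCycle (fun hh => h hh.of_apply_right)]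
  refine ⟨c ^ d, ?_, ?_, (hcomm.pow_left d).eq⟩
  · intro heq
    have h1 : (c ^ d) i₀ = (a ^ d) i₀ := Equiv.Perm.cycleOf_pow_apply_self a i₀ d
    rw [heq] at h1
    have hfix : Function.IsPeriodicPt (⇑a) d i₀ := by
      rw [Function.IsPeriodicPt, Function.IsFixedPt, ← hpow_iter, ← h1]; rfl
    have hle := Nat.le_of_dvd hdpos (hper ▸ hfix.minimalPeriod_dvd)
    have hdlt : d < N := by rw [hN]; exact (lt_mul_iff_one_lt_left hdpos).mpr hk
    omega
  · intro i
    by_cases h : a.SameCycle i₀ i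
    · obtain ⟨m, -, hm⟩ := h.exists_pow_eq'
      have h1 : (c ^ m) i₀ = i := by
        rw [hcdef, Equiv.Perm.cycleOf_pow_apply_self]; exact hm
      have h2 : (c ^ d) i = (a ^ (m + d)) i₀ := by
        rw [← h1, ← Equiv.Perm.mul_apply, ← pow_add, hcdef,
          Equiv.Perm.cycleOf_pow_apply_self, Nat.add_comm]
      have h3 : f i = g m := by rw [hg, ← hm]
      rw [h2, h3]
      exact gstep m
    · have hfix : c i = i := Equiv.Perm.cycleOf_apply_of_not_sameCycle h
      rw [Equiv.Perm.pow_apply_eq_self_of_apply_eq_self hfix]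
end

section
/- Suppose a permutation a ∈ S_n has two distinct cycles (i₀ ⋯ i_{d-1}) and (j₀ ⋯ j_{d-1}) of the same length d ≥ 1 such that f(i_k) = f(j_k) for every 0 ≤ k ≤ d-1. Then a is not f-simple. -/
/-!
In the cyclic group `⟨a⟩` the stabiliser of a point is determined by its period, so two cycles of
the same length are isomorphic as `⟨a⟩`-sets via `a^k i₀ ↦ a^k j₀`. Exchanging the two cycles along
this isomorphism and fixing every other point gives a nontrivial involution commuting with `a`;
it preserves `f` because `f (a^k i₀) = f (a^k j₀)` for all `k ∈ ℤ`, after reducing `k` modulo `d`.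
-/

open Function

namespace Equiv.Perm

variable {α : Type*} {a : Perm α} {x y : α}

theorem zpow_apply_eq_self_iff_minimalPeriod_dvd {k : ℤ} :
    (a ^ k) x = x ↔ (minimalPeriod a x : ℤ) ∣ k :=
  MulAction.zpow_smul_eq_iff_minimalPeriod_dvd (a := a) (b := x)

theorem zpow_emod_minimalPeriod_apply (k : ℤ) :
    (a ^ (k % (minimalPeriod a x : ℤ))) x = (a ^ k) x :=
  MulAction.zpow_smul_mod_minimalPeriod a x k

theorem zpow_apply_eq_zpow_apply_of_minimalPeriod_eq (hper : minimalPeriod a x = minimalPeriod a y)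
    {i j : ℤ} (h : (a ^ i) x = (a ^ j) x) : (a ^ i) y = (a ^ j) y := by
  have key (w : α) : (a ^ i) w = (a ^ j) w ↔ (minimalPeriod a w : ℤ) ∣ -j + i := by
    rw [← zpow_apply_eq_self_iff_minimalPeriod_dvd, zpow_add, mul_apply, zpow_neg, inv_eq_iff_eq]
  exact (key y).2 (hper ▸ (key x).1 h)

theorem exists_pow_apply_eq_zpow_apply (hx : 0 < minimalPeriod a x) (k : ℤ) :
    ∃ m < minimalPeriod a x, (a ^ m) x = (a ^ k) x := by
  have hnonneg : 0 ≤ k % (minimalPeriod a x : ℤ) := Int.emod_nonneg _ (by omega)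
  have hlt : k % (minimalPeriod a x : ℤ) < minimalPeriod a x := Int.emod_lt_of_pos _ (by omega)
  refine ⟨(k % (minimalPeriod a x : ℤ)).toNat, by omega, ?_⟩
  rw [← zpow_natCast, Int.toNat_of_nonneg hnonneg, zpow_emod_minimalPeriod_apply]

theorem induction_on_two_cycles (a : Perm α) (x y : α) {motive : α → Prop}
    (left : ∀ k : ℤ, motive ((a ^ k) x)) (right : ∀ k : ℤ, motive ((a ^ k) y))
    (other : ∀ z, ¬a.SameCycle x z → ¬a.SameCycle y z → motive z) (z : α) : motive z := by
  by_cases hx : a.SameCycle x z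
  · obtain ⟨k, rfl⟩ := hx
    exact left k
  by_cases hy : a.SameCycle y z
  · obtain ⟨k, rfl⟩ := hy
    exact right k
  exact other z hx hy

-- The exponent chosen is irrelevant as soon as `x` and `y` have the same period.
open Classical in
noncomputable def swapCycles (a : Perm α) (x y z : α) : α :=
  if h : a.SameCycle x z then (a ^ h.choose) y
  else if h : a.SameCycle y z then (a ^ h.choose) x else z

section swapCycles

variable (hper : minimalPeriod a x = minimalPeriod a y) (hxy : ¬a.SameCycle x y)
include hper

theorem swapCycles_zpow_apply_left (k : ℤ) : swapCycles a x y ((a ^ k) x) = (a ^ k) y := by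
  have h : a.SameCycle x ((a ^ k) x) := ⟨k, rfl⟩
  rw [swapCycles, dif_pos h]
  exact zpow_apply_eq_zpow_apply_of_minimalPeriod_eq hper h.choose_spec

include hxy

theorem swapCycles_zpow_apply_right (k : ℤ) : swapCycles a x y ((a ^ k) y) = (a ^ k) x := by
  have hx : ¬a.SameCycle x ((a ^ k) y) := by rwa [sameCycle_zpow_right]
  have hy : a.SameCycle y ((a ^ k) y) := ⟨k, rfl⟩
  rw [swapCycles, dif_neg hx, dif_pos hy]
  exact zpow_apply_eq_zpow_apply_of_minimalPeriod_eq hper.symm hy.choose_spec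

omit hper hxy in
theorem swapCycles_of_not_sameCycle {z : α} (hx : ¬a.SameCycle x z) (hy : ¬a.SameCycle y z) :
    swapCycles a x y z = z := by
  rw [swapCycles, dif_neg hx, dif_neg hy]

theorem swapCycles_involutive : Involutive (swapCycles a x y) := by
  intro z
  induction z using induction_on_two_cycles a x y with
  | left k => rw [swapCycles_zpow_apply_left hper, swapCycles_zpow_apply_right hper hxy]
  | right k => rw [swapCycles_zpow_apply_right hper hxy, swapCycles_zpow_apply_left hper]
  | other z hx hy => rw [swapCycles_of_not_sameCycle hx hy, swapCycles_of_not_sameCycle hx hy]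

theorem swapCycles_apply_comm (z : α) : swapCycles a x y (a z) = a (swapCycles a x y z) := by
  have hsucc (w : α) (k : ℤ) : a ((a ^ k) w) = (a ^ (k + 1)) w := by
    rw [add_comm, zpow_add, zpow_one, mul_apply]
  induction z using induction_on_two_cycles a x y with
  | left k =>
    rw [hsucc, swapCycles_zpow_apply_left hper, swapCycles_zpow_apply_left hper, hsucc]
  | right k =>
    rw [hsucc, swapCycles_zpow_apply_right hper hxy, swapCycles_zpow_apply_right hper hxy, hsucc]
  | other z hx hy =>
    have hx' : ¬a.SameCycle x (a z) := by rwa [sameCycle_apply_right]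
    have hy' : ¬a.SameCycle y (a z) := by rwa [sameCycle_apply_right]
    rw [swapCycles_of_not_sameCycle hx hy, swapCycles_of_not_sameCycle hx' hy']

theorem apply_swapCycles {β : Type*} {f : α → β} (hf : ∀ k : ℤ, f ((a ^ k) x) = f ((a ^ k) y))
    (z : α) : f (swapCycles a x y z) = f z := by
  induction z using induction_on_two_cycles a x y with
  | left k => rw [swapCycles_zpow_apply_left hper, hf]
  | right k => rw [swapCycles_zpow_apply_right hper hxy, hf]
  | other z hx hy => rw [swapCycles_of_not_sameCycle hx hy]

end swapCycles

end Equiv.Perm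

open Equiv

/-- Lemma 4.4 (ii): if `a` has two disjoint cycles `(i₀ ⋯ i_{d-1})` and
`(j₀ ⋯ j_{d-1})` of the same length `d ≥ 1` with `f (i_k) = f (j_k)` for all
`0 ≤ k < d`, then `a` is not `f`-simple. -/
theorem stmt6 (n : ℕ) (X : Type*) (f : Fin n → X) (a : Equiv.Perm (Fin n))
    (i₀ j₀ : Fin n) (d : ℕ) (hd : 1 ≤ d)
    (hdisj : ∀ k l : ℕ, (a ^ k) i₀ ≠ (a ^ l) j₀)
    (hpi : Function.minimalPeriod (⇑a) i₀ = d)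
    (hpj : Function.minimalPeriod (⇑a) j₀ = d)
    (hf : ∀ k < d, f ((a ^ k) i₀) = f ((a ^ k) j₀)) :
    ∃ σ : Equiv.Perm (Fin n), σ ≠ 1 ∧ (∀ i, f (σ i) = f i) ∧ σ * a = a * σ := by
  have hper : minimalPeriod a i₀ = minimalPeriod a j₀ := hpi.trans hpj.symm
  have hne : i₀ ≠ j₀ := by simpa using hdisj 0 0
  have hxy : ¬a.SameCycle i₀ j₀ := fun h ↦ by
    obtain ⟨k, hk⟩ := h.exists_nat_pow_eq
    exact hdisj k 0 (by simp [hk])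
  have hfz (k : ℤ) : f ((a ^ k) i₀) = f ((a ^ k) j₀) := by
    obtain ⟨m, hm, hmk⟩ := Perm.exists_pow_apply_eq_zpow_apply (by omega : 0 < minimalPeriod a i₀) k
    have hmk' : (a ^ (m : ℤ)) j₀ = (a ^ k) j₀ :=
      Perm.zpow_apply_eq_zpow_apply_of_minimalPeriod_eq hper (by rwa [zpow_natCast])
    rw [← hmk, ← hmk', zpow_natCast, hf m (hpi ▸ hm)]
  have hσ : Perm.swapCycles a i₀ j₀ i₀ = j₀ := by
    simpa using Perm.swapCycles_zpow_apply_left hper 0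
  refine ⟨(Perm.swapCycles_involutive hper hxy).toPerm, fun h ↦ hne ?_,
    Perm.apply_swapCycles hper hxy hfz, Perm.ext (Perm.swapCycles_apply_comm hper hxy)⟩
  exact (hσ.symm.trans (DFunLike.congr_fun h i₀)).symm
end

section
/- Let p be prime, let d₁,...,d_m be positive integers with p ≥ Σ d_i, and let s ≥ 1. Suppose k_i = Σ_{t=0}^{s−1} k_i[t] p^t with digits 0 ≤ k_i[t] ≤ p−1, not all digits equal to p−1 simultaneously across all i and t ≥ 1, and write Σ_i d_i k_i[t] = u[t]p − v[t] with 0 ≤ v[t] ≤ p−1 and u[t] ≥ 0. If Σ_i d_i k_i ≡ 0 mod (p^s − 1), then u[t−1] = v[t] for every 0 ≤ t ≤ s−1, where u[−1] means u[s−1]. -/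
/-!
Reading `Σ_t x[t] p^t` as a base-`p` number, multiplication by `p` rotates the digits
cyclically modulo `p^s - 1`. Weighting the relations `Σ_i d_i k_i[t] + v[t] = u[t] p` by `p^t`
and summing gives `Σ_i d_i k_i + V = p U`, hence `V ≡ p U ≡ W (mod p^s - 1)`, where `W` has the
rotated digits `u[s-1], u[0], …, u[s-2]`. The bound `p ≥ Σ d_i` keeps every `u[t]` a digit, so
`V` and `W` lie in `[0, p^s - 1]`: either `V = W`, and comparing digits gives `u[t-1] = v[t]`,
or one of them is `0` and the other `p^s - 1`. In the latter case every `u[t]` and `v[t]` is `0`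
or `p - 1`, which forces `Σ_i d_i k_i[t] + (p - 1) = 0` or `Σ_i d_i k_i[t] = p (p - 1)` at a
`t ≥ 1` where some digit `k_i[t]` is below `p - 1`; both are impossible.
-/

open Finset

lemma Nat.ModEq.eq_or_of_le {M x y : ℕ} (h : x ≡ y [MOD M]) (hx : x ≤ M) (hy : y ≤ M) :
    x = y ∨ (x = M ∧ y = 0) ∨ (x = 0 ∧ y = M) := by
  rcases hx.lt_or_eq with hx | rfl <;> rcases hy.lt_or_eq with hy | hy
  · exact .inl (h.eq_of_lt_of_lt hx hy)
  · subst hy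
    have : x = 0 := by simpa [Nat.ModEq, Nat.mod_eq_of_lt hx] using h
    omega
  · have : y = 0 := by simpa [Nat.ModEq, Nat.mod_eq_of_lt hy] using h.symm
    omega
  · omega

section Digits

variable {p s : ℕ} {a b : ℕ → ℕ}

lemma ofDigits_ofFn_eq_sum_range :
    Nat.ofDigits p (List.ofFn fun t : Fin s => a t) = ∑ t ∈ range s, a t * p ^ t := by
  simp only [Nat.ofDigits_eq_sum_mapIdx, List.mapIdx_eq_ofFn, List.get_ofFn, List.length_ofFn,
    List.sum_ofFn]
  exact Fin.sum_univ_eq_sum_range (fun t => a t * p ^ t) s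

lemma sum_range_mul_pow_lt (hp : 1 < p) (ha : ∀ t < s, a t < p) :
    ∑ t ∈ range s, a t * p ^ t < p ^ s := by
  rw [← ofDigits_ofFn_eq_sum_range]
  simpa using Nat.ofDigits_lt_base_pow_length hp (l := List.ofFn fun t : Fin s => a t)
    (by simpa using fun t : Fin s => ha t t.2)

lemma eq_of_sum_range_mul_pow_eq (hp : 1 < p) (ha : ∀ t < s, a t < p)
    (hb : ∀ t < s, b t < p)
    (h : ∑ t ∈ range s, a t * p ^ t = ∑ t ∈ range s, b t * p ^ t) :
    ∀ t < s, a t = b t := by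
  rw [← ofDigits_ofFn_eq_sum_range, ← ofDigits_ofFn_eq_sum_range] at h
  have := List.ofFn_inj.mp (Nat.ofDigits_inj_of_len_eq hp (by simp)
    (by simpa using fun t : Fin s => ha t t.2) (by simpa using fun t : Fin s => hb t t.2) h)
  exact fun t ht => congrFun this ⟨t, ht⟩

lemma sum_range_pred_mul_pow (hp : 0 < p) :
    ∑ t ∈ range s, (p - 1) * p ^ t = p ^ s - 1 := by
  obtain ⟨q, rfl⟩ := Nat.exists_eq_add_one_of_ne_zero hp.ne'
  rw [← geom_sum_mul_add q s, Nat.add_sub_cancel, Nat.add_sub_cancel, sum_mul]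
  simp_rw [mul_comm]

lemma eq_pred_of_sum_range_mul_pow_eq (hp : 1 < p) (ha : ∀ t < s, a t < p)
    (h : ∑ t ∈ range s, a t * p ^ t = p ^ s - 1) : ∀ t < s, a t = p - 1 :=
  eq_of_sum_range_mul_pow_eq hp ha (fun _ _ => by omega)
    (h.trans (sum_range_pred_mul_pow (by omega)).symm)

lemma eq_zero_of_sum_range_mul_pow_eq_zero (hp : 0 < p)
    (h : ∑ t ∈ range s, a t * p ^ t = 0) : ∀ t < s, a t = 0 := fun t ht =>
  (mul_eq_zero.mp (sum_eq_zero_iff.mp h t (mem_range.mpr ht))).resolve_right (by positivity)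

lemma sum_range_mul_pow_modEq_cases (hp : 1 < p) (ha : ∀ t < s, a t < p)
    (hb : ∀ t < s, b t < p)
    (h : ∑ t ∈ range s, a t * p ^ t ≡ ∑ t ∈ range s, b t * p ^ t [MOD p ^ s - 1]) :
    (∀ t < s, a t = b t) ∨ (∀ t < s, a t = p - 1 ∧ b t = 0) ∨
      (∀ t < s, a t = 0 ∧ b t = p - 1) := by
  have hA := sum_range_mul_pow_lt hp ha
  have hB := sum_range_mul_pow_lt hp hb
  rcases h.eq_or_of_le (by omega) (by omega) with h | ⟨hA, hB⟩ | ⟨hA, hB⟩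
  · exact .inl (eq_of_sum_range_mul_pow_eq hp ha hb h)
  · exact .inr <| .inl fun t ht => ⟨eq_pred_of_sum_range_mul_pow_eq hp ha hA t ht,
      eq_zero_of_sum_range_mul_pow_eq_zero (by omega) hB t ht⟩
  · exact .inr <| .inr fun t ht => ⟨eq_zero_of_sum_range_mul_pow_eq_zero (by omega) hA t ht,
      eq_pred_of_sum_range_mul_pow_eq hp hb hB t ht⟩

end Digits

def cycleShift (u : ℕ → ℕ) (n : ℕ) : ℕ → ℕ
  | 0 => u n
  | t + 1 => u t

lemma forall_cycleShift_iff (P : ℕ → Prop) (u : ℕ → ℕ) (n : ℕ) :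
    (∀ t < n + 1, P (cycleShift u n t)) ↔ ∀ t < n + 1, P (u t) := by
  constructor
  · intro h t ht
    rcases (Nat.lt_succ_iff.mp ht).lt_or_eq with ht | rfl
    · exact h (t + 1) (by omega)
    · exact h 0 (by omega)
  · rintro h (_ | t) ht
    · exact h n (by omega)
    · exact h t (by omega)

lemma mul_sum_range_add_eq_cycleShift (p n : ℕ) (u : ℕ → ℕ) :
    p * ∑ t ∈ range (n + 1), u t * p ^ t + u n =
      ∑ t ∈ range (n + 1), cycleShift u n t * p ^ t + u n * p ^ (n + 1) := by
  rw [sum_range_succ, sum_range_succ', mul_add, mul_sum]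
  simp only [cycleShift, pow_zero, mul_one, pow_succ, ← mul_assoc, mul_comm p]
  ring

lemma mul_sum_range_modEq_cycleShift {p : ℕ} (hp : 0 < p) (n : ℕ) (u : ℕ → ℕ) :
    p * ∑ t ∈ range (n + 1), u t * p ^ t ≡
      ∑ t ∈ range (n + 1), cycleShift u n t * p ^ t [MOD p ^ (n + 1) - 1] := by
  have hpow : p ^ (n + 1) ≡ 1 [MOD p ^ (n + 1) - 1] := Nat.modEq_sub (Nat.one_le_pow _ _ hp)
  refine Nat.ModEq.add_right_cancel' (u n) ?_
  rw [mul_sum_range_add_eq_cycleShift]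
  simpa using (hpow.mul_left (u n)).add_left (∑ t ∈ range (n + 1), cycleShift u n t * p ^ t)

lemma sum_range_modEq_cycleShift_of_add_eq_mul {p n : ℕ} (hp : 0 < p) {N u v : ℕ → ℕ}
    (heq : ∀ t < n + 1, N t + v t = u t * p)
    (hN : ∑ t ∈ range (n + 1), N t * p ^ t ≡ 0 [MOD p ^ (n + 1) - 1]) :
    ∑ t ∈ range (n + 1), v t * p ^ t ≡
      ∑ t ∈ range (n + 1), cycleShift u n t * p ^ t [MOD p ^ (n + 1) - 1] := by
  have hsum : ∑ t ∈ range (n + 1), N t * p ^ t + ∑ t ∈ range (n + 1), v t * p ^ t =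
      p * ∑ t ∈ range (n + 1), u t * p ^ t := by
    rw [← sum_add_distrib, mul_sum]
    refine sum_congr rfl fun t ht => ?_
    rw [← add_mul, heq t (mem_range.mp ht)]
    ring
  have := (hN.add_right (∑ t ∈ range (n + 1), v t * p ^ t)).symm
  rw [zero_add, hsum] at this
  exact this.trans (mul_sum_range_modEq_cycleShift hp n u)

lemma lt_of_add_eq_mul_of_le {p N u v : ℕ} (hp : 0 < p) (hN : N ≤ p * (p - 1))
    (hv : v ≤ p - 1) (h : N + v = u * p) : u < p := Nat.lt_of_mul_lt_mul_right <| calc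
  u * p = N + v := h.symm
  _ ≤ p * (p - 1) + (p - 1) := add_le_add hN hv
  _ < p * (p - 1) + p := by omega
  _ = p * p := by rw [← Nat.mul_add_one, Nat.sub_add_cancel hp]

lemma sum_mul_sum_range_mul_pow {ι : Type*} (S : Finset ι) (d : ι → ℕ)
    (k : ι → ℕ → ℕ) (p s : ℕ) :
    ∑ i ∈ S, d i * ∑ t ∈ range s, k i t * p ^ t =
      ∑ t ∈ range s, (∑ i ∈ S, d i * k i t) * p ^ t := by
  simp only [mul_sum, sum_mul, mul_assoc]
  exact sum_comm

theorem stmt11_general (p : ℕ) (hp : p.Prime) (m : ℕ) (d : Fin m → ℕ)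
    (hdpos : ∀ i, 0 < d i) (hpd : ∑ i, d i ≤ p)
    (s : ℕ) (k : Fin m → ℕ → ℕ)
    (hdig : ∀ i, ∀ t < s, k i t ≤ p - 1)
    (hnot : ¬ ∀ i, ∀ t, 1 ≤ t → t < s → k i t = p - 1)
    (u v : ℕ → ℕ) (hv : ∀ t < s, v t ≤ p - 1)
    (heq : ∀ t < s, (∑ i, d i * k i t) + v t = u t * p)
    (hdvd : ((p : ℤ) ^ s - 1) ∣
      ∑ i, (d i : ℤ) * ∑ t ∈ Finset.range s, (k i t : ℤ) * (p : ℤ) ^ t) :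
    (∀ t, 1 ≤ t → t < s → u (t - 1) = v t) ∧ u (s - 1) = v 0 := by
  push Not at hnot
  obtain ⟨i₀, t₀, -, ht₀s, hk₀⟩ := hnot
  obtain ⟨n, rfl⟩ : ∃ n, s = n + 1 := ⟨s - 1, by omega⟩
  have hweights : ∑ i, d i * (p - 1) ≤ p * (p - 1) := by
    rw [← sum_mul]; exact Nat.mul_le_mul_right _ hpd
  have hcarry_lt : ∑ i, d i * k i t₀ < p * (p - 1) :=
    (sum_lt_sum (fun i _ => Nat.mul_le_mul_left _ (hdig i t₀ ht₀s)) ⟨i₀, mem_univ _,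
      Nat.mul_lt_mul_of_pos_left ((hdig i₀ t₀ ht₀s).lt_of_ne hk₀) (hdpos i₀)⟩).trans_le
      hweights
  have hu : ∀ t < n + 1, u t < p := fun t ht => lt_of_add_eq_mul_of_le hp.pos
    ((sum_le_sum fun i _ => Nat.mul_le_mul_left _ (hdig i t ht)).trans hweights)
    (hv t ht) (heq t ht)
  have hK : ∑ t ∈ range (n + 1), (∑ i, d i * k i t) * p ^ t ≡ 0 [MOD p ^ (n + 1) - 1] := by
    rw [← sum_mul_sum_range_mul_pow]
    refine Nat.modEq_zero_iff_dvd.mpr (Int.natCast_dvd_natCast.mp ?_)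
    push_cast [Nat.one_le_pow _ _ hp.pos]
    exact hdvd
  rcases sum_range_mul_pow_modEq_cases hp.one_lt
      (fun t ht => (hv t ht).trans_lt (Nat.sub_one_lt hp.ne_zero))
      ((forall_cycleShift_iff (· < p) u n).mpr hu)
      (sum_range_modEq_cycleShift_of_add_eq_mul hp.pos heq hK) with h | h | h
  · refine ⟨fun t ht₁ ht => ?_, (h 0 n.succ_pos).symm⟩
    obtain ⟨t, rfl⟩ : ∃ t', t = t' + 1 := ⟨t - 1, by omega⟩
    exact (h (t + 1) ht).symm
  · have hut₀ := (forall_cycleShift_iff (· = 0) u n).mp (fun t ht => (h t ht).2) t₀ ht₀s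
    have := heq t₀ ht₀s
    rw [(h t₀ ht₀s).1, hut₀] at this
    have := hp.two_le
    omega
  · have hut₀ := (forall_cycleShift_iff (· = p - 1) u n).mp (fun t ht => (h t ht).2) t₀ ht₀s
    have := heq t₀ ht₀s
    rw [(h t₀ ht₀s).1, hut₀, mul_comm] at this
    omega

/-- Proposition 3.4: if `p ≥ Σ dᵢ`, the `k_i[t]` are base-`p` digits (not all
equal to `p−1` across all `i` and `t ≥ 1`), `Σᵢ dᵢ k_i[t] = u[t]p − v[t]` with
`0 ≤ v[t] ≤ p−1`, and `(p^s − 1) ∣ Σᵢ dᵢ kᵢ`, then `u[t−1] = v[t]` cyclically. -/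
theorem stmt11 (p : ℕ) (hp : p.Prime) (m : ℕ) (d : Fin m → ℕ)
    (hdpos : ∀ i, 0 < d i) (hpd : ∑ i, d i ≤ p)
    (s : ℕ) (hs : 1 ≤ s) (k : Fin m → ℕ → ℕ)
    (hdig : ∀ i, ∀ t < s, k i t ≤ p - 1)
    (hnot : ¬ ∀ i, ∀ t, 1 ≤ t → t < s → k i t = p - 1)
    (u v : ℕ → ℕ) (hv : ∀ t < s, v t ≤ p - 1)
    (heq : ∀ t < s, (∑ i, d i * k i t) + v t = u t * p)
    (hdvd : ((p : ℤ) ^ s - 1) ∣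
      ∑ i, (d i : ℤ) * ∑ t ∈ Finset.range s, (k i t : ℤ) * (p : ℤ) ^ t) :
    (∀ t, 1 ≤ t → t < s → u (t - 1) = v t) ∧ u (s - 1) = v 0 :=
  stmt11_general p hp m d hdpos hpd s k hdig hnot u v hv heq hdvd
end
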